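/- Let V be a 3-dimensional real vector space with basis {T, X, Y}, φ a symmetric bilinear form whose only nonzero entries on the basis are φ(T,T) = φ(X,Y) = φ(Y,X) = 1, and A a 4-tensor with the symmetries of an algebraic curvature tensor whose only nonzero entries (up to those symmetries) are generated by A(T,X,X,T) = ε for some ε ≠ 0. If F : V → V is a linear isomorphism with F*φ = φ and F*A = A, then there exist real numbers a₁,...,a₆ with a₁² = a₄² = 1 such that FT = a₁T + a₂Y, FX = a₃T + a₄X + a₅Y, and FY = a₆Y. -/

import Mathlib

set_option maxHeartbeats 1600000 in
/-- isomorphism group of the model space (V, φ, A) with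
φ(T,T) = φ(X,Y) = 1 and A generated by A(T,X,X,T) = ε ≠ 0. -/
theorem stmt0 (V : Type*) [AddCommGroup V] [Module ℝ V]
    (b : Module.Basis (Fin 3) ℝ V)
    (T X Y : V) (hT : T = b 0) (hX : X = b 1) (hY : Y = b 2)
    (φ : V →ₗ[ℝ] V →ₗ[ℝ] ℝ)
    (hφsymm : ∀ u v, φ u v = φ v u)
    (hφTT : φ T T = 1) (hφXY : φ X Y = 1)
    (hφTX : φ T X = 0) (hφTY : φ T Y = 0)
    (hφXX : φ X X = 0) (hφYY : φ Y Y = 0)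
    (A : V →ₗ[ℝ] V →ₗ[ℝ] V →ₗ[ℝ] V →ₗ[ℝ] ℝ)
    (hA1 : ∀ x y z w, A x y z w = -A y x z w)
    (hA2 : ∀ x y z w, A x y z w = -A x y w z)
    (hA3 : ∀ x y z w, A x y z w = A z w x y)
    (hBianchi : ∀ x y z w, A x y z w + A y z x w + A z x y w = 0)
    (ε : ℝ) (hε : ε ≠ 0)
    (hATXXT : A T X X T = ε)
    (hAzero : ∀ i j k l : Fin 3,
      ¬((i = 0 ∧ j = 1 ∧ k = 1 ∧ l = 0) ∨ (i = 1 ∧ j = 0 ∧ k = 0 ∧ l = 1) ∨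
        (i = 0 ∧ j = 1 ∧ k = 0 ∧ l = 1) ∨ (i = 1 ∧ j = 0 ∧ k = 1 ∧ l = 0)) →
      A (b i) (b j) (b k) (b l) = 0)
    (F : V ≃ₗ[ℝ] V)
    (hFφ : ∀ u v, φ (F u) (F v) = φ u v)
    (hFA : ∀ x y z w, A (F x) (F y) (F z) (F w) = A x y z w) :
    ∃ a₁ a₂ a₃ a₄ a₅ a₆ : ℝ, a₁ ^ 2 = 1 ∧ a₄ ^ 2 = 1 ∧
      F T = a₁ • T + a₂ • Y ∧
      F X = a₃ • T + a₄ • X + a₅ • Y ∧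
      F Y = a₆ • Y := by
  -- basis values of A
  have e1 : A (b 0) (b 1) (b 1) (b 0) = ε := by rw [← hT, ← hX]; exact hATXXT
  have e2 : A (b 1) (b 0) (b 0) (b 1) = ε := by
    rw [← hT, ← hX, hA1, hA2, neg_neg]; exact hATXXT
  have e3 : A (b 0) (b 1) (b 0) (b 1) = -ε := by
    rw [← hT, ← hX, hA2, hATXXT]
  have e4 : A (b 1) (b 0) (b 1) (b 0) = -ε := by
    rw [← hT, ← hX, hA1, hATXXT]
  have hAb : ∀ i j k l : Fin 3, A (b i) (b j) (b k) (b l) =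
      ε * (if i = 0 ∧ j = 1 ∧ k = 1 ∧ l = 0 then 1 else
        if i = 1 ∧ j = 0 ∧ k = 0 ∧ l = 1 then 1 else
        if i = 0 ∧ j = 1 ∧ k = 0 ∧ l = 1 then -1 else
        if i = 1 ∧ j = 0 ∧ k = 1 ∧ l = 0 then -1 else 0) := by
    intro i j k l
    by_cases h : (i = 0 ∧ j = 1 ∧ k = 1 ∧ l = 0) ∨ (i = 1 ∧ j = 0 ∧ k = 0 ∧ l = 1) ∨
        (i = 0 ∧ j = 1 ∧ k = 0 ∧ l = 1) ∨ (i = 1 ∧ j = 0 ∧ k = 1 ∧ l = 0)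
    · rcases h with ⟨hi,hj,hk,hl⟩|⟨hi,hj,hk,hl⟩|⟨hi,hj,hk,hl⟩|⟨hi,hj,hk,hl⟩ <;>
        subst hi hj hk hl <;> norm_num <;>
        first
          | exact e1
          | exact e2
          | linarith [e3]
          | linarith [e4]
    · rw [hAzero i j k l h]
      simp only [not_or] at h
      obtain ⟨h1, h2, h3, h4⟩ := h
      rw [if_neg h1, if_neg h2, if_neg h3, if_neg h4]
      ring
  -- basis values of φ
  have p00 : φ (b 0) (b 0) = 1 := by rw [← hT]; exact hφTT
  have p01 : φ (b 0) (b 1) = 0 := by rw [← hT, ← hX]; exact hφTX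
  have p02 : φ (b 0) (b 2) = 0 := by rw [← hT, ← hY]; exact hφTY
  have p10 : φ (b 1) (b 0) = 0 := by rw [← hT, ← hX, hφsymm]; exact hφTX
  have p11 : φ (b 1) (b 1) = 0 := by rw [← hX]; exact hφXX
  have p12 : φ (b 1) (b 2) = 1 := by rw [← hX, ← hY]; exact hφXY
  have p20 : φ (b 2) (b 0) = 0 := by rw [← hT, ← hY, hφsymm]; exact hφTY
  have p21 : φ (b 2) (b 1) = 1 := by rw [← hX, ← hY, hφsymm]; exact hφXY
  have p22 : φ (b 2) (b 2) = 0 := by rw [← hY]; exact hφYY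
  -- coordinates
  have hrep : ∀ v : V, v = b.repr v 0 • b 0 + b.repr v 1 • b 1 + b.repr v 2 • b 2 := by
    intro v
    have := b.sum_repr v
    rw [Fin.sum_univ_three] at this
    exact this.symm
  obtain ⟨t0, t1, t2, huT⟩ : ∃ c0 c1 c2 : ℝ, F T = c0 • b 0 + c1 • b 1 + c2 • b 2 :=
    ⟨_, _, _, hrep _⟩
  obtain ⟨x0, x1, x2, huX⟩ : ∃ c0 c1 c2 : ℝ, F X = c0 • b 0 + c1 • b 1 + c2 • b 2 :=
    ⟨_, _, _, hrep _⟩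
  obtain ⟨y0, y1, y2, huY⟩ : ∃ c0 c1 c2 : ℝ, F Y = c0 • b 0 + c1 • b 1 + c2 • b 2 :=
    ⟨_, _, _, hrep _⟩
  -- curvature equations
  have E1 : A (F T) (F X) (F T) (F X) = -ε := by
    rw [hFA, hT, hX]; exact e3
  have E2 : A (F T) (F X) (F T) (F Y) = 0 := by
    rw [hFA, hT, hX, hY]; exact hAzero 0 1 0 2 (by decide)
  have E3 : A (F T) (F X) (F X) (F Y) = 0 := by
    rw [hFA, hT, hX, hY]; exact hAzero 0 1 1 2 (by decide)
  rw [huT, huX] at E1 E2 E3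
  rw [huY] at E2 E3
  have f01 : ((0 : Fin 3) = 1) = False := by decide
  have f02 : ((0 : Fin 3) = 2) = False := by decide
  have f10 : ((1 : Fin 3) = 0) = False := by decide
  have f12 : ((1 : Fin 3) = 2) = False := by decide
  have f20 : ((2 : Fin 3) = 0) = False := by decide
  have f21 : ((2 : Fin 3) = 1) = False := by decide
  simp only [map_add, map_smul, LinearMap.add_apply, LinearMap.smul_apply,
    smul_eq_mul, hAb, f01, f02, f10, f12, f20, f21, eq_self_iff_true,
    true_and, and_true, false_and, and_false, if_true, if_false, reduceIte,
    mul_zero, mul_one, zero_mul, one_mul, add_zero, zero_add] at E1 E2 E3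
  -- metric equations
  have G1 : φ (F T) (F T) = 1 := by rw [hFφ]; exact hφTT
  have G2 : φ (F T) (F Y) = 0 := by rw [hFφ]; exact hφTY
  have G3 : φ (F X) (F Y) = 1 := by rw [hFφ]; exact hφXY
  rw [huT] at G1 G2
  rw [huY] at G2 G3
  rw [huX] at G3
  simp only [map_add, map_smul, LinearMap.add_apply, LinearMap.smul_apply,
    smul_eq_mul, p00, p01, p02, p10, p11, p12, p20, p21, p22] at G1 G2 G3
  norm_num at G1 G2 G3
  -- algebra
  have hP2 : (t0 * x1 - t1 * x0) ^ 2 = 1 := by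
    have h : ε * ((t0 * x1 - t1 * x0) ^ 2 - 1) = 0 := by linear_combination -E1
    rcases mul_eq_zero.mp h with h' | h'
    · exact absurd h' hε
    · linarith
  have hE2' : (t0 * x1 - t1 * x0) * (t0 * y1 - t1 * y0) = 0 := by
    have h : ε * ((t0 * x1 - t1 * x0) * (t0 * y1 - t1 * y0)) = 0 := by
      linear_combination -E2
    rcases mul_eq_zero.mp h with h' | h'
    · exact absurd h' hε
    · exact h'
  have hE3' : (t0 * x1 - t1 * x0) * (x0 * y1 - x1 * y0) = 0 := by
    have h : ε * ((t0 * x1 - t1 * x0) * (x0 * y1 - x1 * y0)) = 0 := by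
      linear_combination -E3
    rcases mul_eq_zero.mp h with h' | h'
    · exact absurd h' hε
    · exact h'
  have hy1z : y1 = 0 := by linear_combination x1 * hE2' - t1 * hE3' - y1 * hP2
  have hy0z : y0 = 0 := by linear_combination x0 * hE2' - t0 * hE3' - y0 * hP2
  rw [hy0z, hy1z] at G2 G3
  have hG3' : x1 * y2 = 1 := by linear_combination G3
  have hy2ne : y2 ≠ 0 := by
    intro h; rw [h] at hG3'; norm_num at hG3'
  have ht1z : t1 = 0 := by
    have h : t1 * y2 = 0 := by linear_combination G2
    rcases mul_eq_zero.mp h with h' | h'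
    · exact h'
    · exact absurd h' hy2ne
  rw [ht1z] at G1 hP2
  have ht02 : t0 ^ 2 = 1 := by linear_combination G1
  have hx12 : x1 ^ 2 = 1 := by linear_combination hP2 - x1 ^ 2 * ht02
  refine ⟨t0, t2, x0, x1, x2, y2, ht02, hx12, ?_, ?_, ?_⟩
  · rw [huT, hT, hY, ht1z]; simp
  · rw [huX, hT, hX, hY]
  · rw [huY, hY, hy0z, hy1z]; simp
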